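/- In a self-similar graph, for a vertex v in F, the number of cells containing v in their boundary times (θ_X − 1) equals the degree of v in the reduced graph X_F; consequently c_X·(θ_X − 1) = M_X, where c_X is the supremum of cell counts over boundary vertices and M_X the supremum of degrees. -/

import Mathlib

variable {V : Type*}

/-- `C` is a cell w.r.t. `F`: a connected component of `V X ∖ F`. -/
def IsCellOf (G : SimpleGraph V) (F : Set V) (C : Set V) : Prop :=
  C.Nonempty ∧ C ⊆ Fᶜ ∧ (G.induce C).Preconnected ∧
    ∀ D : Set V, C ⊆ D → D ⊆ Fᶜ → (G.induce D).Preconnected → D = C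

/-- vertex boundary θC -/
def vBoundary (G : SimpleGraph V) (C : Set V) : Set V :=
  {v | v ∉ C ∧ ∃ c ∈ C, G.Adj v c}

/-- closure of a set of vertices -/
def vClosure (G : SimpleGraph V) (C : Set V) : Set V := C ∪ vBoundary G C

/-- edge boundary δC -/
def eBoundary (G : SimpleGraph V) (C : Set V) : Set (Sym2 V) :=
  {e | ∃ x y, G.Adj x y ∧ e = s(x, y) ∧ x ∈ C ∧ y ∉ C}

/-- edges of the cell graph Ĉ (subgraph spanned by the closure of C) -/
def cellEdges (G : SimpleGraph V) (C : Set V) : Set (Sym2 V) :=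
  {e | ∃ x y, G.Adj x y ∧ e = s(x, y) ∧ x ∈ vClosure G C ∧ y ∈ vClosure G C}

/-- the reduced graph X_F -/
def reducedGraph (G : SimpleGraph V) (F : Set V) : SimpleGraph F where
  Adj x y := x ≠ y ∧ ∃ C : Set V, IsCellOf G F C ∧
    (x : V) ∈ vBoundary G C ∧ (y : V) ∈ vBoundary G C
  symm := ⟨by
    rintro x y ⟨hxy, C, hC, hx, hy⟩
    exact ⟨hxy.symm, C, hC, hy, hx⟩⟩
  loopless := ⟨by rintro x ⟨hx, -⟩; exact hx rfl⟩

/-- F^n = ψ^n (V X), as a subset of V -/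
def Fpow (G : SimpleGraph V) (F : Set V) (ψ : G ≃g reducedGraph G F) : ℕ → Set V
  | 0 => Set.univ
  | n + 1 => (fun v => ((ψ v : F) : V)) '' Fpow G F ψ n

/-- (F1) no two vertices of F adjacent -/
def AxiomF1 (G : SimpleGraph V) (F : Set V) : Prop :=
  ∀ x ∈ F, ∀ y ∈ F, ¬ G.Adj x y

/-- (F2) closures of distinct cells share at most one vertex -/
def AxiomF2 (G : SimpleGraph V) (F : Set V) : Prop :=
  ∀ C D : Set V, IsCellOf G F C → IsCellOf G F D → C ≠ D →
    (vClosure G C ∩ vClosure G D).Subsingleton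

/-- (H1) cell graphs finite, pairwise isomorphic via boundary preserving isomorphisms -/
def AxiomH1 (G : SimpleGraph V) (F : Set V) : Prop :=
  (∀ C : Set V, IsCellOf G F C → (vClosure G C).Finite) ∧
  ∀ C D : Set V, IsCellOf G F C → IsCellOf G F D →
    ∃ α : G.induce (vClosure G C) ≃g G.induce (vClosure G D),
      ∀ x : vClosure G C, (x : V) ∈ vBoundary G C → ((α x : vClosure G D) : V) ∈ vBoundary G D

/-- (H2) any two distinct boundary vertices of a cell are at distance ν -/
def AxiomH2 (G : SimpleGraph V) (F : Set V) (ν : ℕ) : Prop :=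
  ∀ C : Set V, IsCellOf G F C → ∀ x ∈ vBoundary G C, ∀ y ∈ vBoundary G C,
    x ≠ y → G.dist x y = ν

/-- constant inner degree `b` : every boundary vertex of every cell has degree b in the cell graph -/
def ConstInnerDegree (G : SimpleGraph V) (F : Set V) (b : ℕ) : Prop :=
  ∀ C : Set V, IsCellOf G F C → ∀ v ∈ vBoundary G C,
    {u ∈ vClosure G C | G.Adj v u}.ncard = b

/-- bounded geometry: vertex degrees uniformly bounded -/
def BoundedGeometry (G : SimpleGraph V) : Prop :=
  ∃ M : ℕ, ∀ v : V, (G.neighborSet v).Finite ∧ (G.neighborSet v).ncard ≤ M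

/-- volume of a set of vertices -/
noncomputable def volOf (G : SimpleGraph V) (A : Set V) : ℕ :=
  ∑ᶠ v ∈ A, (G.neighborSet v).ncard

/-- growth function -/
noncomputable def Vfun (G : SimpleGraph V) (x : V) (r : ℕ) : ℕ :=
  volOf G {y | G.dist x y ≤ r}


/-!
Every neighbour `w` of `v ∈ F` in the reduced graph lies, together with `v`, in the boundary
of some cell, and by (F2) this cell is unique. So the neighbourhood of `v` is in bijection with
the pairs `(C, w)` of a cell `C` with `v ∈ θC` and a point `w ∈ θC \ {v}`, and each cell
contributes `θ_X − 1` such points. Transporting degrees along `X ≅ X_F` gives the statement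
about suprema.
-/

theorem Nat.card_sigma_of_forall_card_eq {α : Type*} {β : α → Type*} {k : ℕ} (hk : 0 < k)
    (h : ∀ a, Nat.card (β a) = k) : Nat.card (Σ a, β a) = Nat.card α * k := by
  have e : ∀ a, β a ≃ Fin k := fun a =>
    haveI : Finite (β a) := Nat.finite_of_card_ne_zero (by rw [h a]; omega)
    Finite.equivFinOfCardEq (h a)
  rw [Nat.card_congr ((Equiv.sigmaCongrRight e).trans (Equiv.sigmaEquivProd α (Fin k))),
    Nat.card_prod, Nat.card_fin]

theorem Nat.sSup_image_mul_right (A : Set ℕ) {k : ℕ} (hk : 0 < k) :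
    sSup ((· * k) '' A) = sSup A * k := by
  rcases A.eq_empty_or_nonempty with rfl | hA
  · simp
  by_cases hb : BddAbove A
  · have hub : ∀ m ∈ (· * k) '' A, m ≤ sSup A * k := by
      rintro m ⟨a, ha, rfl⟩
      exact Nat.mul_le_mul_right k (le_csSup hb ha)
    exact le_antisymm (csSup_le (hA.image _) hub)
      (le_csSup ⟨sSup A * k, hub⟩ ⟨_, Nat.sSup_mem hA hb, rfl⟩)
  · have hinf : A.Infinite := fun hfin => hb hfin.bddAbove
    have himg : ((· * k) '' A).Infinite :=
      hinf.image fun a _ b _ h => Nat.eq_of_mul_eq_mul_right hk h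
    rw [Set.Infinite.Nat.sSup_eq_zero hinf, Set.Infinite.Nat.sSup_eq_zero himg, Nat.zero_mul]

theorem SimpleGraph.Iso.range_ncard_neighborSet {W : Type*} {G : SimpleGraph V}
    {G' : SimpleGraph W} (f : G ≃g G') :
    Set.range (fun v => (G.neighborSet v).ncard) =
      Set.range (fun w => (G'.neighborSet w).ncard) := by
  rw [← f.surjective.range_comp]
  congr 1
  ext v
  rw [Function.comp_apply, ← f.image_neighborSet, Set.ncard_image_of_injective _ f.injective]

theorem IsCellOf.vBoundary_subset {G : SimpleGraph V} {F C : Set V} (hC : IsCellOf G F C) :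
    vBoundary G C ⊆ F := by
  rintro u ⟨huC, c, hcC, hadj⟩
  by_contra huF
  have hpre : (G.induce (insert u C)).Preconnected := by
    rw [← Set.singleton_union]
    exact (SimpleGraph.connected_induce_union SimpleGraph.Preconnected.of_subsingleton hC.2.2.1
      (Set.mem_singleton u) hcC hadj).preconnected
  have hDF : insert u C ⊆ Fᶜ := Set.insert_subset huF hC.2.1
  exact huC (hC.2.2.2 _ (Set.subset_insert u C) hDF hpre ▸ Set.mem_insert u C)

/-- The paper's `cells_X(v)` is the cardinality of this set. -/
def cellsAt (G : SimpleGraph V) (F : Set V) (v : V) : Set (Set V) :=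
  {C | IsCellOf G F C ∧ v ∈ vBoundary G C}

section Reduced

variable {G : SimpleGraph V} {F : Set V}

noncomputable def cellsAtSigmaEquivNeighborSet (hF2 : AxiomF2 G F) (v : F) :
    (Σ C : cellsAt G F v, ↥(vBoundary G C \ {(v : V)})) ≃ (reducedGraph G F).neighborSet v :=
  Equiv.ofBijective
    (fun p => ⟨⟨p.2, p.1.2.1.vBoundary_subset p.2.2.1⟩,
      fun h => p.2.2.2 (congrArg Subtype.val h).symm, p.1, p.1.2.1, p.1.2.2, p.2.2.1⟩)
    ⟨fun ⟨C, w⟩ ⟨D, w'⟩ h => by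
      have hw : (w : V) = w' := congrArg (fun x : (reducedGraph G F).neighborSet v => (x : V)) h
      refine Sigma.subtype_ext (Subtype.ext ?_) hw
      by_contra hCD
      exact w.2.2 (hF2 C D C.2.1 D.2.1 hCD ⟨Or.inr w.2.1, Or.inr (hw ▸ w'.2.1)⟩
        ⟨Or.inr C.2.2, Or.inr D.2.2⟩),
    fun ⟨w, hne, C, hC, hv, hw⟩ =>
      ⟨⟨⟨C, hC, hv⟩, ⟨w, hw, fun h => hne (Subtype.ext h).symm⟩⟩, rfl⟩⟩

theorem ncard_cellsAt_mul_eq_ncard_neighborSet (hF2 : AxiomF2 G F) {θX : ℕ} (hθ : 2 ≤ θX)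
    (hθX : ∀ C : Set V, IsCellOf G F C → (vBoundary G C).ncard = θX) (v : F) :
    (cellsAt G F v).ncard * (θX - 1) = ((reducedGraph G F).neighborSet v).ncard := by
  rw [← Nat.card_coe_set_eq, ← Nat.card_coe_set_eq,
    ← Nat.card_congr (cellsAtSigmaEquivNeighborSet hF2 v),
    Nat.card_sigma_of_forall_card_eq (k := θX - 1) (by omega) ?_]
  rintro ⟨C, hC, hv⟩
  rw [Nat.card_coe_set_eq, Set.ncard_sdiff_singleton_of_mem hv, hθX C hC]

end Reduced

theorem cells_mul_eq_reduced_degree_general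
    {V : Type*} (G : SimpleGraph V)
    (F : Set V) (ψ : G ≃g reducedGraph G F)
    (hF2 : AxiomF2 G F)
    (θX : ℕ) (hθ : 2 ≤ θX)
    (hθX : ∀ C : Set V, IsCellOf G F C → (vBoundary G C).ncard = θX) :
    (∀ v : F,
      {C : Set V | IsCellOf G F C ∧ (v : V) ∈ vBoundary G C}.ncard * (θX - 1)
        = ((reducedGraph G F).neighborSet v).ncard)
    ∧ sSup {m : ℕ | ∃ v : F,
          m = {C : Set V | IsCellOf G F C ∧ (v : V) ∈ vBoundary G C}.ncard} * (θX - 1)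
        = sSup {m : ℕ | ∃ v : V, m = (G.neighborSet v).ncard} := by
  have hrange : ∀ {α : Type _} (f : α → ℕ), {m : ℕ | ∃ a, m = f a} = Set.range f :=
    fun f => by
      ext m
      exact exists_congr fun _ => eq_comm
  have hlocal := ncard_cellsAt_mul_eq_ncard_neighborSet hF2 hθ hθX
  refine ⟨hlocal, ?_⟩
  rw [hrange, hrange, ψ.range_ncard_neighborSet, ← Nat.sSup_image_mul_right _ (by omega),
    ← Set.range_comp]
  exact congrArg sSup (congrArg Set.range (funext hlocal))

/-- For a vertex `v ∈ F`, the number of cells containing `v` in their boundary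
times `θ_X − 1` equals the degree of `v` in the reduced graph `X_F`;
consequently `c_X·(θ_X − 1) = M_X`. -/
theorem cells_mul_eq_reduced_degree
    {V : Type*} [Infinite V] (G : SimpleGraph V) (hconn : G.Connected)
    (F : Set V) (ψ : G ≃g reducedGraph G F)
    (hF1 : AxiomF1 G F) (hF2 : AxiomF2 G F) (hH1 : AxiomH1 G F)
    (ν : ℕ) (hν : 2 ≤ ν) (hH2 : AxiomH2 G F ν)
    (θX : ℕ) (hθ : 2 ≤ θX)
    (hθX : ∀ C : Set V, IsCellOf G F C → (vBoundary G C).ncard = θX) :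
    (∀ v : F,
      {C : Set V | IsCellOf G F C ∧ (v : V) ∈ vBoundary G C}.ncard * (θX - 1)
        = ((reducedGraph G F).neighborSet v).ncard)
    ∧ sSup {m : ℕ | ∃ v : F,
          m = {C : Set V | IsCellOf G F C ∧ (v : V) ∈ vBoundary G C}.ncard} * (θX - 1)
        = sSup {m : ℕ | ∃ v : V, m = (G.neighborSet v).ncard} :=
  cells_mul_eq_reduced_degree_general G F ψ hF2 θX hθ hθX
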